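/- Let Σ be a compact oriented surface, φ ∈ Homeo_0(Σ) with identity isotopy Φ, and S = {x_1, …, x_k} a simple periodic orbit of φ of period k. Let γ ⊂ M_φ be the closed integral curve of the suspension flow corresponding to S. Then, identifying H_1(M_φ; ℤ) with H_1((ℝ/ℤ) × Σ; ℤ) via the homeomorphism η: (ℝ/ℤ) × Σ → M_φ, [(t, p)] ↦ [(t, φ_t^{-1}(p))], one has [γ] = k·([𝕋] + F(Φ, S)), where [𝕋] is the class of the circle factor. -/

import Mathlib

/-!
On `[j, j + 1]` the loop follows the isotopy path `t ↦ (t, φₜ y)` from `y = φʲ x₁`, and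
`f (t, φₜ y) = (f (t, φₜ y) - f (0, φₜ y)) + (f (0, φₜ y) - f (0, y)) + f (0, y)`.
The first term lifts along the homotopy lift `K` of `f (t, z) - f (0, z)` starting at `0`; its
endpoint `K (1, ·)` is integer-valued, hence constant on the connected surface, and equals the
degree `d`. The second term lifts along the rotation lift of `f (0, ·)`, ending at `g y`. Hence each
segment winds by `d + g (φʲ x₁)`, and summing over the orbit gives `k d + k ∫ g`.
-/

open MeasureTheory Set Function Filter

noncomputable section

/-- The circle `𝕋 = ℝ/ℤ`. -/
abbrev Circ : Type := AddCircle (1 : ℝ)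

variable {X : Type*} [TopologicalSpace X]

/-- An identity isotopy of a homeomorphism `φ`: a continuous path `t ↦ φₜ` of
homeomorphisms (continuous, together with the inverses, in the `C⁰` sense)
with `φ₀ = id` and `φ₁ = φ`. -/
structure IdentityIsotopy (φ : X ≃ₜ X) where
  φt : ℝ → X ≃ₜ X
  continuous_toFun : Continuous fun p : ℝ × X => φt p.1 p.2
  continuous_invFun : Continuous fun p : ℝ × X => (φt p.1).symm p.2
  map_zero : φt 0 = Homeomorph.refl X
  map_one : φt 1 = φ

/-- `g : X → ℝ` is the real-valued lift of the circle-valued function `f ∘ φ − f`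
determined by the identity isotopy `Φ`: it is the endpoint of a continuous family of
real-valued lifts of `f ∘ φₜ − f` starting at `0`. -/
def IsRotationLift {φ : X ≃ₜ X} (Φ : IdentityIsotopy φ) (f : C(X, Circ)) (g : X → ℝ) : Prop :=
  ∃ G : ℝ × X → ℝ, Continuous G ∧ (∀ x, G (0, x) = 0) ∧
    (∀ t x, ((G (t, x) : ℝ) : Circ) = f (Φ.φt t x) - f x) ∧ ∀ x, g x = G (1, x)

/-- `RotPair Φ μ f r` says that the pairing `⟨F(Φ, μ), [f]⟩` of the rotation vector
`F(Φ, μ) ∈ H₁(X; ℝ) ≅ Hom([X, ℝ/ℤ], ℝ)` of the `φ`-invariant measure `μ` with the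
cohomology class of `f : X → ℝ/ℤ` equals `r`, i.e. `∫ g dμ = r` for the lift `g` of
`f ∘ φ − f` determined by `Φ`. -/
def RotPair [MeasurableSpace X] {φ : X ≃ₜ X} (Φ : IdentityIsotopy φ) (μ : Measure X)
    (f : C(X, Circ)) (r : ℝ) : Prop :=
  ∃ g : X → ℝ, IsRotationLift Φ f g ∧ ∫ x, g x ∂μ = r

/-- The circle map `f : ℝ/ℤ → ℝ/ℤ` has degree `d`. -/
def HasCircleDegree (f : Circ → Circ) (d : ℤ) : Prop :=
  ∃ L : ℝ → ℝ, Continuous L ∧ (∀ t : ℝ, ((L t : ℝ) : Circ) = f (t : ℝ)) ∧ L 1 = L 0 + d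

/-- The `φ`-invariant probability measure associated to the periodic orbit of `x` of
period `k`: the average of the Dirac measures at the points of the orbit. -/
def orbitMeasure {X : Type*} [MeasurableSpace X] (φ : X → X) (x : X) (k : ℕ) :
    Measure X :=
  (k : ENNReal)⁻¹ • ∑ j ∈ Finset.range k, Measure.dirac (φ^[j] x)

open unitInterval

theorem Circ.isCoveringMap_coe : IsCoveringMap ((↑) : ℝ → Circ) :=
  AddCircle.isCoveringMap_coe 1

theorem Circ.coe_natCast_add (j : ℕ) (t : ℝ) : (((j : ℝ) + t : ℝ) : Circ) = t := by
  rw [AddCircle.coe_add, (AddCircle.coe_eq_zero_iff 1).2 ⟨j, by simp⟩, zero_add]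

-- `H (0, ·)` itself need not lift to `ℝ`; subtracting it makes `0` a lift of the initial map.
theorem exists_lift_sub_initial {A : Type*} [TopologicalSpace A] (H : C(I × A, Circ)) :
    ∃ K : C(I × A, ℝ), (∀ a, K (0, a) = 0) ∧ ∀ t a, (K (t, a) : Circ) = H (t, a) - H (0, a) := by
  let H' : C(I × A, Circ) := ⟨fun q => H q - H (0, q.2), by fun_prop⟩
  have hH'0 : ∀ a, H' (0, a) = ((ContinuousMap.const A (0 : ℝ) a : ℝ) : Circ) := by simp [H']
  refine ⟨Circ.isCoveringMap_coe.liftHomotopy H' _ hH'0,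
    Circ.isCoveringMap_coe.liftHomotopy_zero H' _ hH'0, fun t a => ?_⟩
  exact congr_fun (Circ.isCoveringMap_coe.liftHomotopy_lifts H' _ hH'0) (t, a)

theorem HasCircleDegree.lift_one_eq {A : Type*} [TopologicalSpace A] [PreconnectedSpace A]
    {f : C(Circ × A, Circ)} {a₀ : A} {d : ℤ} (hd : HasCircleDegree (fun u => f (u, a₀)) d)
    {K : I × A → ℝ} (hK : Continuous K) (hK0 : ∀ a, K (0, a) = 0)
    (hKf : ∀ t a, (K (t, a) : Circ) = f ((t : ℝ), a) - f (0, a)) (a : A) : K (1, a) = d := by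
  have hK1 : ∀ a, (K (1, a) : Circ) = 0 := fun a => by simp [hKf, AddCircle.coe_period]
  have hconst : K (1, a) = K (1, a₀) :=
    Circ.isCoveringMap_coe.const_of_comp (g := fun a => K (1, a)) (by fun_prop)
      (fun a a' => by simp only [hK1]) a a₀
  obtain ⟨Ld, hLdc, hLd, hLd1⟩ := hd
  have hpath : (fun t : I => K (t, a₀)) = fun t : I => Ld t - Ld 0 :=
    Circ.isCoveringMap_coe.eq_of_comp_eq (by fun_prop) (by fun_prop)
      (funext fun t => by simp [hKf, hLd]) 0 (by simp [hK0])
  have hK1a₀ := congr_fun hpath 1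
  simp only [Set.Icc.coe_one, hLd1] at hK1a₀
  linarith

theorem IsRotationLift.continuous {φ : X ≃ₜ X} {Φ : IdentityIsotopy φ} {f : C(X, Circ)}
    {g : X → ℝ} (hg : IsRotationLift Φ f g) : Continuous g := by
  obtain ⟨G, hGc, -, -, hgG⟩ := hg
  rw [funext hgG]
  fun_prop

theorem IdentityIsotopy.lift_one_sub_lift_zero [PreconnectedSpace X] {φ : X ≃ₜ X}
    (Φ : IdentityIsotopy φ) {f : C(Circ × X, Circ)} {x₀ : X} {d : ℤ}
    (hd : HasCircleDegree (fun u => f (u, x₀)) d)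
    {g : X → ℝ} (hg : IsRotationLift Φ ⟨fun x => f (0, x), by fun_prop⟩ g) (x : X)
    {Λ : ℝ → ℝ} (hΛc : Continuous Λ) (hΛ : ∀ t ∈ Icc (0 : ℝ) 1, (Λ t : Circ) = f (t, Φ.φt t x)) :
    Λ 1 - Λ 0 = d + g x := by
  obtain ⟨K, hK0, hKf⟩ := exists_lift_sub_initial
    (⟨fun q => f ((q.1 : ℝ), q.2), by fun_prop⟩ : C(I × X, Circ))
  have hK1 := hd.lift_one_eq K.continuous hK0 hKf
  obtain ⟨G, hGc, hG0, hGf, hgG⟩ := hg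
  have hΦ : Continuous fun t : I => Φ.φt t x :=
    Φ.continuous_toFun.comp (continuous_subtype_val.prodMk continuous_const)
  let h : I → ℝ := fun t => Λ t - K (t, Φ.φt t x) - G (t, x)
  have hh : ∀ t, (h t : Circ) = f (0, x) := fun t => by
    simp [h, hΛ t t.2, hKf, hGf]
  have h01 := Circ.isCoveringMap_coe.const_of_comp (g := h) (by fun_prop)
    (fun t t' => by simp only [hh]) 0 1
  simp only [h, Set.Icc.coe_zero, Set.Icc.coe_one, hK0, hG0, hK1, ← hgG] at h01
  linarith

theorem IdentityIsotopy.φt_fract_natCast_add {φ : X ≃ₜ X} (Φ : IdentityIsotopy φ) (x : X)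
    (j : ℕ) {t : ℝ} (ht : t ∈ Icc (0 : ℝ) 1) :
    Φ.φt (Int.fract ((j : ℝ) + t)) ((φ.toEquiv ^ ⌊(j : ℝ) + t⌋) x) = Φ.φt t (φ^[j] x) := by
  rcases ht.2.lt_or_eq with ht1 | rfl
  · have hjt : (j : ℝ) + t = ((j : ℤ) : ℝ) + t := by push_cast; rfl
    rw [hjt, Int.fract_intCast_add, Int.fract_eq_self.2 ⟨ht.1, ht1⟩, Int.floor_intCast_add,
      Int.floor_eq_zero_iff.2 ⟨ht.1, ht1⟩, add_zero, zpow_natCast, ← Equiv.Perm.iterate_eq_pow,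
      Homeomorph.coe_toEquiv]
  · have hj1 : (j : ℝ) + 1 = ((j + 1 : ℕ) : ℝ) := by push_cast; rfl
    rw [hj1, Int.fract_natCast, Int.floor_natCast, zpow_natCast, ← Equiv.Perm.iterate_eq_pow,
      Homeomorph.coe_toEquiv, Φ.map_zero, Φ.map_one, iterate_succ_apply']
    rfl

theorem natCast_mul_integral_orbitMeasure {α : Type*} [MeasurableSpace α] (φ : α → α) (x : α)
    (k : ℕ) {g : α → ℝ} (hg : StronglyMeasurable g) :
    (k : ℝ) * ∫ y, g y ∂orbitMeasure φ x k = ∑ j ∈ Finset.range k, g (φ^[j] x) := by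
  have hint : ∀ a, Integrable g (Measure.dirac a) := fun a =>
    ⟨hg.aestronglyMeasurable, by simp [HasFiniteIntegral, lintegral_dirac' _ hg.measurable.enorm]⟩
  rw [orbitMeasure, integral_smul_measure, integral_finsetSum_measure fun j _ => hint _,
    ENNReal.toReal_inv, ENNReal.toReal_natCast, smul_eq_mul]
  simp_rw [integral_dirac' _ _ hg]
  rcases eq_or_ne k 0 with rfl | hk
  · simp
  · rw [← mul_assoc, mul_inv_cancel₀ (Nat.cast_ne_zero.2 hk), one_mul]

/-- The identity of homology classes is tested against every `f : C((ℝ/ℤ) × S, ℝ/ℤ)`: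
`η⁻¹ ∘ γ` is the loop `s ↦ (s mod 1, φ_{s - ⌊s⌋} (φ^⌊s⌋ x₁))`, `s ∈ [0, k]`, whose pairing with
`[f]` is the winding `L k - L 0` of a real lift `L` of `f ∘ η⁻¹ ∘ γ`, while `[𝕋]` pairs with `[f]`
to the degree `d` of `f` on the circle factor and `F(Φ, S₀)` to `ρ`. -/
theorem homology_class_of_closed_orbit_general
    (S : Type*) [TopologicalSpace S] [ConnectedSpace S]
    [MeasurableSpace S] [BorelSpace S]
    (φ : S ≃ₜ S) (Φ : IdentityIsotopy φ)
    -- a simple periodic orbit of period `k`, represented by the point `x₁` :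
    (x₁ : S) (k : ℕ)
    (f : C(Circ × S, Circ))
    -- `L` is a real lift of `f ∘ η⁻¹ ∘ γ` :
    (L : ℝ → ℝ) (hLc : Continuous L)
    (hL : ∀ s : ℝ, ((L s : ℝ) : Circ) =
      f ((s : Circ), Φ.φt (Int.fract s) ((φ.toEquiv ^ (⌊s⌋ : ℤ)) x₁)))
    -- `d` is the degree of `f` on the circle factor :
    (p₀ : S) (d : ℤ) (hd : HasCircleDegree (fun u => f (u, p₀)) d)
    -- `ρ = ⟨F(Φ, S₀), f(0, ·)⟩` :
    (ρ : ℝ)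
    (hρ : RotPair Φ (orbitMeasure ⇑φ x₁ k)
      ⟨fun pt => f ((0 : Circ), pt),
        f.continuous.comp (continuous_const.prodMk continuous_id)⟩ ρ) :
    L (k : ℝ) - L 0 = (k : ℝ) * ((d : ℝ) + ρ) := by
  obtain ⟨g, hg, rfl⟩ := hρ
  have hstep : ∀ j : ℕ, L (j + 1) - L j = d + g (φ^[j] x₁) := fun j => by
    simpa using Φ.lift_one_sub_lift_zero hd hg (φ^[j] x₁) (Λ := fun t => L (j + t))
      (by fun_prop) fun t ht => by rw [hL, Circ.coe_natCast_add, Φ.φt_fract_natCast_add x₁ j ht]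
  calc L k - L 0 = ∑ j ∈ Finset.range k, (L ((j + 1 : ℕ) : ℝ) - L j) := by
        simpa using (Finset.sum_range_sub (fun j : ℕ => L j) k).symm
    _ = ∑ j ∈ Finset.range k, ((d : ℝ) + g (φ^[j] x₁)) := by simp [hstep]
    _ = k * (d + ∫ x, g x ∂orbitMeasure (⇑φ) x₁ k) := by
      rw [Finset.sum_add_distrib, ← natCast_mul_integral_orbitMeasure _ _ _
        (hg.continuous.stronglyMeasurable)]
      simp [mul_add]

/-- **Lemma (homology class of a closed orbit of the suspension flow).**  Let `S` be
a compact oriented surface, `φ ∈ Homeo₀(S)` with identity isotopy `Φ`, and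
`S₀ = {x₁, …, x_k}` a simple periodic orbit of `φ` of period `k` (so `x₁` has minimal
period `k`).  Let `γ ⊂ M_φ` be the corresponding closed integral curve of the
suspension flow.  Identifying `H₁(M_φ; ℤ)` with `H₁((ℝ/ℤ) × S; ℤ)` via the
homeomorphism `η : (ℝ/ℤ) × S → M_φ`, `[(t, p)] ↦ [(t, φₜ⁻¹(p))]`, one has
`[γ] = k · ([𝕋] + F(Φ, S₀))`.

In pairing form: `η⁻¹ ∘ γ` is the loop `s ↦ (s mod 1, φ_{s−⌊s⌋}(φ^{⌊s⌋}(x₁)))`,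
`s ∈ [0, k]`, and for every `f : C((ℝ/ℤ) × S, ℝ/ℤ)` with real lift `L` of
`f ∘ η⁻¹ ∘ γ`, the winding `L k − L 0` equals `k (d + ρ)`, where `d` is the degree
of `f` on the circle factor and `ρ = ⟨F(Φ, S₀), f(0, ·)⟩`. -/
theorem homology_class_of_closed_orbit
    (S : Type*) [TopologicalSpace S] [CompactSpace S] [ConnectedSpace S] [T2Space S]
    [ChartedSpace (EuclideanHalfSpace 2) S] [MeasurableSpace S] [BorelSpace S]
    (φ : S ≃ₜ S) (Φ : IdentityIsotopy φ)
    -- a simple periodic orbit of period `k`, represented by the point `x₁` :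
    (x₁ : S) (k : ℕ) (hk : 0 < k) (hper : Function.minimalPeriod ⇑φ x₁ = k)
    (f : C(Circ × S, Circ))
    -- `L` is a real lift of `f ∘ η⁻¹ ∘ γ` :
    (L : ℝ → ℝ) (hLc : Continuous L)
    (hL : ∀ s : ℝ, ((L s : ℝ) : Circ) =
      f ((s : Circ), Φ.φt (Int.fract s) ((φ.toEquiv ^ (⌊s⌋ : ℤ)) x₁)))
    -- `d` is the degree of `f` on the circle factor :
    (p₀ : S) (d : ℤ) (hd : HasCircleDegree (fun u => f (u, p₀)) d)
    -- `ρ = ⟨F(Φ, S₀), f(0, ·)⟩` :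
    (ρ : ℝ)
    (hρ : RotPair Φ (orbitMeasure ⇑φ x₁ k)
      ⟨fun pt => f ((0 : Circ), pt),
        f.continuous.comp (continuous_const.prodMk continuous_id)⟩ ρ) :
    L (k : ℝ) - L 0 = (k : ℝ) * ((d : ℝ) + ρ) :=
  homology_class_of_closed_orbit_general S φ Φ x₁ k f L hLc hL p₀ d hd ρ hρ
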